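/- arXiv:2512.08268 — 2 statements merged into one kernel-verified Lean document; each statement's English description precedes it below -/
import Mathlib

section
/- Hellinger loss boosting: for every α ∈ [1/2, 1], every β ∈ [0, 1], and every (possibly partial) function f : X → {0,1} with X ⊆ {0,1}^m, the maximum distributional complexity at Hellinger loss parameter α·(1 − (1−β)/6) satisfies R̄̄_{Hel↓, α(1−(1−β)/6)}(f) ≤ R̄̄_{Hel↓, α}(f) + 2·R̄̄_{Hel↓, β}(f). -/
open Finset

/-- Deterministic decision trees querying coordinates `i : ι` of inputs `x : ι → Bool`,
with leaves labelled by elements of `L`. -/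
inductive DTree (ι : Type) (L : Type) : Type
  | leaf (lab : L) : DTree ι L
  | node (i : ι) (t0 : DTree ι L) (t1 : DTree ι L) : DTree ι L

namespace DTree

variable {ι L : Type}

/-- Output label at the leaf reached by input `x`. -/
def out : DTree ι L → (ι → Bool) → L
  | .leaf lab, _ => lab
  | .node i t0 t1, x => if x i then out t1 x else out t0 x

/-- Number of queries made on input `x` (depth of the leaf reached by `x`). -/
def cost : DTree ι L → (ι → Bool) → ℕ
  | .leaf _, _ => 0
  | .node i t0 t1, x => (if x i then cost t1 x else cost t0 x) + 1

/-- Maximum leaf depth of the tree. -/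
def depth : DTree ι L → ℕ
  | .leaf _ => 0
  | .node _ t0 t1 => max (depth t0) (depth t1) + 1

/-- The set of inputs reaching the same leaf as input `x`. -/
def leafSet : DTree ι L → (ι → Bool) → Set (ι → Bool)
  | .leaf _, _ => Set.univ
  | .node i t0 t1, x => {y | y i = x i} ∩ (if x i then leafSet t1 x else leafSet t0 x)

/-- Every leaf label of the tree satisfies the predicate `P`. -/
def allLabels : DTree ι L → (L → Prop) → Prop
  | .leaf lab, P => P lab
  | .node _ t0 t1, P => allLabels t0 P ∧ allLabels t1 P

end DTree

/-- A randomized query algorithm: a finitely supported probability distribution over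
deterministic decision trees. -/
structure RandAlg (ι : Type) (L : Type) where
  k : ℕ
  p : Fin k → ℝ
  T : Fin k → DTree ι L
  p_nonneg : ∀ j, 0 ≤ p j
  p_sum : ∑ j, p j = 1

/-- A probability distribution on inputs, supported inside the domain `X`. -/
structure InputDist (ι : Type) [Fintype ι] [DecidableEq ι] (X : Set (ι → Bool)) where
  μ : (ι → Bool) → ℝ
  nonneg : ∀ x, 0 ≤ μ x
  sum_one : ∑ x, μ x = 1
  supp : ∀ x, x ∉ X → μ x = 0

/-- A score function `φ : [0,1] → [1/2,1]`. -/
structure ScoreFun where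
  φ : ℝ → ℝ
  continuous : ContinuousOn φ (Set.Icc 0 1)
  half_le : ∀ p ∈ Set.Icc (0:ℝ) 1, 1 / 2 ≤ φ p
  le_one : ∀ p ∈ Set.Icc (0:ℝ) 1, φ p ≤ 1
  map_zero : φ 0 = 1
  map_one : φ 1 = 1
  map_half : φ (1 / 2) = 1 / 2
  symm : ∀ p ∈ Set.Icc (0:ℝ) 1, φ (1 - p) = φ p
  mono : MonotoneOn φ (Set.Icc (1 / 2) 1)

section Defs

variable {ι L : Type} [Fintype ι] [DecidableEq ι]

/-- Mass of a set of inputs under the weight function `μ`. -/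
noncomputable def mass (μ : (ι → Bool) → ℝ) (S : Set (ι → Bool)) : ℝ :=
  ∑ x, Set.indicator S μ x

/-- Score `φ(μ(ℓ₁)/μ(ℓ))` of the leaf `ℓ` reached by `x` in the tree `t`. -/
noncomputable def leafScore (S : ScoreFun) (f : (ι → Bool) → Bool) (μ : (ι → Bool) → ℝ)
    (t : DTree ι L) (x : ι → Bool) : ℝ :=
  S.φ (mass μ (t.leafSet x ∩ {y | f y = true}) / mass μ (t.leafSet x))

/-- Score of a randomized algorithm: `E_{D∼R, x∼μ}[score(D(x))]`. -/
noncomputable def algScore (S : ScoreFun) (f : (ι → Bool) → Bool) (μ : (ι → Bool) → ℝ)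
    (R : RandAlg ι L) : ℝ :=
  ∑ j, R.p j * ∑ x, μ x * leafScore S f μ (R.T j) x

/-- Expected cost `E_{D∼R, x∼μ}[cost(D(x))]`. -/
noncomputable def expCost (μ : (ι → Bool) → ℝ) (R : RandAlg ι L) : ℝ :=
  ∑ j, R.p j * ∑ x, μ x * ((R.T j).cost x : ℝ)

/-- Score-weighted cost `E[score(D(x))·cost(D(x))] / E[score(D(x))]`. -/
noncomputable def scost (S : ScoreFun) (f : (ι → Bool) → Bool) (μ : (ι → Bool) → ℝ)
    (R : RandAlg ι L) : ℝ :=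
  (∑ j, R.p j * ∑ x, μ x * (leafScore S f μ (R.T j) x * ((R.T j).cost x : ℝ))) /
    algScore S f μ R

/-- Discounted score `E[score(D(x))·e^{-α·cost(D(x))}]`. -/
noncomputable def dScore (S : ScoreFun) (f : (ι → Bool) → Bool) (μ : (ι → Bool) → ℝ)
    (α : ℝ) (R : RandAlg ι L) : ℝ :=
  ∑ j, R.p j * ∑ x, μ x *
    (leafScore S f μ (R.T j) x * Real.exp (-(α * ((R.T j).cost x : ℝ))))

/-- Maximum discounted score `DS_α^μ(f)`. -/
noncomputable def DS (S : ScoreFun) (f : (ι → Bool) → Bool) (μ : (ι → Bool) → ℝ)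
    (α : ℝ) : ℝ :=
  ⨆ R : RandAlg ι Unit, dScore S f μ α R

/-- Distributional score-weighted query complexity `sR̄̄_γ^μ(f)`. -/
noncomputable def sRdist (S : ScoreFun) (f : (ι → Bool) → Bool) (μ : (ι → Bool) → ℝ)
    (γ : ℝ) : ℝ :=
  sInf {c | ∃ R : RandAlg ι Unit, γ ≤ algScore S f μ R ∧ scost S f μ R = c}

/-- Distributional query complexity `R̄̄_γ^μ(f)` (expected cost). -/
noncomputable def Rdist (S : ScoreFun) (f : (ι → Bool) → Bool) (μ : (ι → Bool) → ℝ)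
    (γ : ℝ) : ℝ :=
  sInf {c | ∃ R : RandAlg ι Unit, γ ≤ algScore S f μ R ∧ expCost μ R = c}

/-- Maximum score-weighted distributional query complexity `sR̄̄_γ(f)`. -/
noncomputable def sRmax (S : ScoreFun) (X : Set (ι → Bool)) (f : (ι → Bool) → Bool)
    (γ : ℝ) : ℝ :=
  ⨆ μ : InputDist ι X, sRdist S f μ.μ γ

/-- Maximum distributional query complexity `R̄̄_γ(f)`. -/
noncomputable def Rmax (S : ScoreFun) (X : Set (ι → Bool)) (f : (ι → Bool) → Bool)
    (γ : ℝ) : ℝ :=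
  ⨆ μ : InputDist ι X, Rdist S f μ.μ γ

/-- Success-probability score `max{μ(ℓ₀),μ(ℓ₁)}/μ(ℓ)` of the leaf reached by `x`. -/
noncomputable def succLeafScore (f : (ι → Bool) → Bool) (μ : (ι → Bool) → ℝ)
    (t : DTree ι L) (x : ι → Bool) : ℝ :=
  max (mass μ (t.leafSet x ∩ {y | f y = false})) (mass μ (t.leafSet x ∩ {y | f y = true})) /
    mass μ (t.leafSet x)

/-- Success-probability score of a randomized algorithm. -/
noncomputable def succAlgScore (f : (ι → Bool) → Bool) (μ : (ι → Bool) → ℝ)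
    (R : RandAlg ι L) : ℝ :=
  ∑ j, R.p j * ∑ x, μ x * succLeafScore f μ (R.T j) x

/-- Distributional query complexity with the success-probability score. -/
noncomputable def succRdist (f : (ι → Bool) → Bool) (μ : (ι → Bool) → ℝ) (γ : ℝ) : ℝ :=
  sInf {c | ∃ R : RandAlg ι Unit, γ ≤ succAlgScore f μ R ∧ expCost μ R = c}

/-- Maximum distributional query complexity `R̄̄_γ(f)` with the success-probability score. -/
noncomputable def succRmax (X : Set (ι → Bool)) (f : (ι → Bool) → Bool) (γ : ℝ) : ℝ :=
  ⨆ μ : InputDist ι X, succRdist f μ.μ γ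

/-- The fraction `q = μ(ℓ₁)/μ(ℓ)` at the leaf reached by `x`. -/
noncomputable def leafBias (f : (ι → Bool) → Bool) (μ : (ι → Bool) → ℝ)
    (t : DTree ι L) (x : ι → Bool) : ℝ :=
  mass μ (t.leafSet x ∩ {y | f y = true}) / mass μ (t.leafSet x)

/-- Hellinger loss `E[2·√(q(1-q))]` of a randomized algorithm. -/
noncomputable def helLossAlg (f : (ι → Bool) → Bool) (μ : (ι → Bool) → ℝ)
    (R : RandAlg ι L) : ℝ :=
  ∑ j, R.p j * ∑ x, μ x *
    (2 * Real.sqrt (leafBias f μ (R.T j) x * (1 - leafBias f μ (R.T j) x)))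

/-- Hellinger score `E[1 - √(q(1-q))]` of a randomized algorithm. -/
noncomputable def helScoreAlg (f : (ι → Bool) → Bool) (μ : (ι → Bool) → ℝ)
    (R : RandAlg ι L) : ℝ :=
  ∑ j, R.p j * ∑ x, μ x *
    (1 - Real.sqrt (leafBias f μ (R.T j) x * (1 - leafBias f μ (R.T j) x)))

/-- `R̄̄_{Hel↓,ε}(f)`: maximum distributional complexity at Hellinger loss `ε`. -/
noncomputable def RmaxHelLoss (X : Set (ι → Bool)) (f : (ι → Bool) → Bool) (ε : ℝ) : ℝ :=
  ⨆ μ : InputDist ι X,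
    sInf {c | ∃ R : RandAlg ι Unit, helLossAlg f μ.μ R ≤ ε ∧ expCost μ.μ R = c}

/-- `R̄̄_{Hel,γ}(f)`: maximum distributional complexity at Hellinger score `γ`. -/
noncomputable def RmaxHel (X : Set (ι → Bool)) (f : (ι → Bool) → Bool) (γ : ℝ) : ℝ :=
  ⨆ μ : InputDist ι X,
    sInf {c | ∃ R : RandAlg ι Unit, γ ≤ helScoreAlg f μ.μ R ∧ expCost μ.μ R = c}

/-- Binary entropy function. -/
noncomputable def binEnt (p : ℝ) : ℝ :=
  -(p * Real.logb 2 p) - (1 - p) * Real.logb 2 (1 - p)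

/-- Exponential-entropy score `E[1 - (1/2)·2^{-h(q)}]` of a randomized algorithm. -/
noncomputable def entScoreAlg (f : (ι → Bool) → Bool) (μ : (ι → Bool) → ℝ)
    (R : RandAlg ι L) : ℝ :=
  ∑ j, R.p j * ∑ x, μ x *
    (1 - (1 / 2) * (2:ℝ) ^ (-(binEnt (leafBias f μ (R.T j) x))))

/-- `R̄̄_{Ent,γ}(f)`: maximum distributional complexity at exponential-entropy score `γ`. -/
noncomputable def RmaxEnt (X : Set (ι → Bool)) (f : (ι → Bool) → Bool) (γ : ℝ) : ℝ :=
  ⨆ μ : InputDist ι X,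
    sInf {c | ∃ R : RandAlg ι Unit, γ ≤ entScoreAlg f μ.μ R ∧ expCost μ.μ R = c}

end Defs

section WorstCase

variable {ι L : Type}

open Classical in
/-- Worst-case randomized query complexity for a generic task: minimum, over randomized
algorithms whose leaf labels satisfy `labelOK` and which on every input `x ∈ X` output a
label `z` with `good x z` with probability at least `δ`, of the maximum leaf depth over
the trees in the support. -/
noncomputable def RwcTask (X : Set (ι → Bool)) (good : (ι → Bool) → L → Prop)
    (labelOK : L → Prop) (δ : ℝ) : ℕ :=
  sInf {d : ℕ | ∃ R : RandAlg ι L,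
    (∀ j, R.p j ≠ 0 → (R.T j).allLabels labelOK) ∧
    (∀ x ∈ X, δ ≤ ∑ j, if good x ((R.T j).out x) then R.p j else 0) ∧
    ∀ j, R.p j ≠ 0 → (R.T j).depth ≤ d}

/-- Worst-case randomized query complexity `R_δ(f)` of a (partial) Boolean function. -/
noncomputable def Rwc (X : Set (ι → Bool)) (f : (ι → Bool) → Bool) (δ : ℝ) : ℕ :=
  RwcTask X (fun x b => b = f x) (fun _ : Bool => True) δ

end WorstCase

section Product

variable {m n : ℕ} {L : Type}

/-- The `i`-th block of an input to the `n`-fold direct product. -/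
def block (x : Fin n × Fin m → Bool) (i : Fin n) : Fin m → Bool := fun j => x (i, j)

/-- The product domain `Xⁿ`. -/
def Xpow (n : ℕ) (X : Set (Fin m → Bool)) : Set (Fin n × Fin m → Bool) :=
  {x | ∀ i, block x i ∈ X}

/-- The `n`-fold direct product `fⁿ`. -/
def fpow (f : (Fin m → Bool) → Bool) (x : Fin n × Fin m → Bool) : Fin n → Bool :=
  fun i => f (block x i)

/-- The product distribution `μⁿ`. -/
noncomputable def prodMu (μ : (Fin m → Bool) → ℝ) (x : Fin n × Fin m → Bool) : ℝ :=
  ∏ i, μ (block x i)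

/-- The `i`-th factor `ℓ^(i)` of the (product) leaf reached by `x` in a decision tree for `fⁿ`. -/
def blockSet (t : DTree (Fin n × Fin m) L) (x : Fin n × Fin m → Bool) (i : Fin n) :
    Set (Fin m → Bool) :=
  {y | (fun q : Fin n × Fin m => if q.1 = i then y q.2 else x q) ∈ t.leafSet x}

/-- Score of a leaf of a tree for `fⁿ` under `μⁿ`: the product of the scores of its factors. -/
noncomputable def prodLeafScore (S : ScoreFun) (f : (Fin m → Bool) → Bool)
    (μ : (Fin m → Bool) → ℝ) (t : DTree (Fin n × Fin m) L) (x : Fin n × Fin m → Bool) : ℝ :=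
  ∏ i, S.φ (mass μ (blockSet t x i ∩ {y | f y = true}) / mass μ (blockSet t x i))

/-- Score of a randomized algorithm for `fⁿ` under `μⁿ`. -/
noncomputable def algScoreN (S : ScoreFun) (f : (Fin m → Bool) → Bool)
    (μ : (Fin m → Bool) → ℝ) (R : RandAlg (Fin n × Fin m) L) : ℝ :=
  ∑ j, R.p j * ∑ x, prodMu μ x * prodLeafScore S f μ (R.T j) x

/-- Score-weighted cost of a randomized algorithm for `fⁿ` under `μⁿ`. -/
noncomputable def scostN (S : ScoreFun) (f : (Fin m → Bool) → Bool)
    (μ : (Fin m → Bool) → ℝ) (R : RandAlg (Fin n × Fin m) L) : ℝ :=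
  (∑ j, R.p j * ∑ x, prodMu μ x * (prodLeafScore S f μ (R.T j) x * ((R.T j).cost x : ℝ))) /
    algScoreN S f μ R

/-- Discounted score of a randomized algorithm for `fⁿ` under `μⁿ`. -/
noncomputable def dScoreN (S : ScoreFun) (f : (Fin m → Bool) → Bool)
    (μ : (Fin m → Bool) → ℝ) (α : ℝ) (R : RandAlg (Fin n × Fin m) L) : ℝ :=
  ∑ j, R.p j * ∑ x, prodMu μ x *
    (prodLeafScore S f μ (R.T j) x * Real.exp (-(α * ((R.T j).cost x : ℝ))))

/-- Maximum discounted score `DS_α^{μⁿ}(fⁿ)`. -/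
noncomputable def DSN (S : ScoreFun) (f : (Fin m → Bool) → Bool)
    (μ : (Fin m → Bool) → ℝ) (α : ℝ) (n : ℕ) : ℝ :=
  ⨆ R : RandAlg (Fin n × Fin m) Unit, dScoreN S f μ α R

/-- Distributional score-weighted query complexity `sR̄̄_γ^{μⁿ}(fⁿ)`. -/
noncomputable def sRdistN (S : ScoreFun) (f : (Fin m → Bool) → Bool)
    (μ : (Fin m → Bool) → ℝ) (γ : ℝ) (n : ℕ) : ℝ :=
  sInf {c | ∃ R : RandAlg (Fin n × Fin m) Unit,
    γ ≤ algScoreN S f μ R ∧ scostN S f μ R = c}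

/-- Worst-case randomized query complexity `R_δ(fⁿ)` of computing `fⁿ` exactly. -/
noncomputable def RwcN (X : Set (Fin m → Bool)) (f : (Fin m → Bool) → Bool)
    (n : ℕ) (δ : ℝ) : ℕ :=
  RwcTask (Xpow n X) (fun x z => z = fpow f x) (fun _ : Fin n → Bool => True) δ

/-- Success-probability score `max_z μ(ℓ ∩ (fⁿ)⁻¹(z))/μ(ℓ)` of a leaf of a tree for `fⁿ`
under an arbitrary distribution `μ` on `Xⁿ`. -/
noncomputable def succLeafScoreN (f : (Fin m → Bool) → Bool)
    (μ : (Fin n × Fin m → Bool) → ℝ) (t : DTree (Fin n × Fin m) L)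
    (x : Fin n × Fin m → Bool) : ℝ :=
  (⨆ z : Fin n → Bool, mass μ (t.leafSet x ∩ {y | fpow f y = z})) / mass μ (t.leafSet x)

/-- Success-probability score of a randomized algorithm for `fⁿ`. -/
noncomputable def succAlgScoreN (f : (Fin m → Bool) → Bool)
    (μ : (Fin n × Fin m → Bool) → ℝ) (R : RandAlg (Fin n × Fin m) L) : ℝ :=
  ∑ j, R.p j * ∑ x, μ x * succLeafScoreN f μ (R.T j) x

/-- Score-weighted cost of a randomized algorithm for `fⁿ` (success-probability score). -/
noncomputable def succScostN (f : (Fin m → Bool) → Bool)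
    (μ : (Fin n × Fin m → Bool) → ℝ) (R : RandAlg (Fin n × Fin m) L) : ℝ :=
  (∑ j, R.p j * ∑ x, μ x * (succLeafScoreN f μ (R.T j) x * ((R.T j).cost x : ℝ))) /
    succAlgScoreN f μ R

/-- Maximum score-weighted distributional query complexity `sR̄̄_δ(fⁿ)`
(success-probability score). -/
noncomputable def succSRmaxN (X : Set (Fin m → Bool)) (f : (Fin m → Bool) → Bool)
    (n : ℕ) (δ : ℝ) : ℝ :=
  ⨆ μ : InputDist (Fin n × Fin m) (Xpow n X),
    sInf {c | ∃ R : RandAlg (Fin n × Fin m) Unit,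
      δ ≤ succAlgScoreN f μ.μ R ∧ succScostN f μ.μ R = c}

/-- Worst-case randomized query complexity of the list-decoding task `LD_ℓⁿ ∘ f`. -/
noncomputable def RwcLD (X : Set (Fin m → Bool)) (f : (Fin m → Bool) → Bool)
    (n ℓ : ℕ) (δ : ℝ) : ℕ :=
  RwcTask (Xpow n X) (fun x S => fpow f x ∈ S)
    (fun S : Finset (Fin n → Bool) => S.card = 2 ^ (n - ℓ)) δ

open Classical in
/-- Worst-case randomized query complexity of the threshold task `Thr_kⁿ ∘ f`. -/
noncomputable def RwcThr (X : Set (Fin m → Bool)) (f : (Fin m → Bool) → Bool)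
    (n k : ℕ) (δ : ℝ) : ℕ :=
  RwcTask (Xpow n X)
    (fun x z => k ≤ (Finset.univ.filter fun i => z i = fpow f x i).card)
    (fun _ : Fin n → Bool => True) δ

open Classical in
/-- Worst-case randomized query complexity of the labelled threshold task `Label_kⁿ ∘ f`. -/
noncomputable def RwcLabel (X : Set (Fin m → Bool)) (f : (Fin m → Bool) → Bool)
    (n k : ℕ) (δ : ℝ) : ℕ :=
  RwcTask (Xpow n X)
    (fun x z => ∀ i b, z i = some b → fpow f x i = b)
    (fun z : Fin n → Option Bool =>
      (Finset.univ.filter fun i => (z i).isSome).card = k) δ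

end Product

/-!
The Hellinger loss multiplies under composition. Given `μ`, run an algorithm of loss `α`; on
reaching a leaf `ℓ`, rescale the two classes of `μ|ℓ` to mass `1/2` each and run an algorithm of
loss `β` for that distribution. The leaf loss `2√(μ(ℓ₀)μ(ℓ₁))` is homogeneous of degree `1/2` in
each class, so the second stage has loss at most `β · 2√(μ(ℓ₀)μ(ℓ₁))` on `μ|ℓ`, while the rescaled
distribution dominates `μ|ℓ / (2μ(ℓ))`, so its cost is at most `2μ(ℓ) · R̄̄_{Hel↓,β}(f)`. Summing
over leaves, the composite has loss at most `αβ ≤ α(1 − (1 − β)/6)` and expected cost at most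
`R̄̄_{Hel↓,α}(f) + 2 R̄̄_{Hel↓,β}(f)`.
-/

namespace RandAlg

variable {ι L L' : Type}

noncomputable def expect (R : RandAlg ι L) (Φ : DTree ι L → ℝ) : ℝ :=
  ∑ j, R.p j * Φ (R.T j)

lemma expect_congr (R : RandAlg ι L) {Φ Ψ : DTree ι L → ℝ} (h : ∀ t, Φ t = Ψ t) :
    R.expect Φ = R.expect Ψ := by
  simp only [expect, h]

lemma expect_mono (R : RandAlg ι L) {Φ Ψ : DTree ι L → ℝ} (h : ∀ t, Φ t ≤ Ψ t) :
    R.expect Φ ≤ R.expect Ψ :=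
  Finset.sum_le_sum fun j _ => mul_le_mul_of_nonneg_left (h _) (R.p_nonneg j)

lemma expect_const (R : RandAlg ι L) (c : ℝ) : R.expect (fun _ => c) = c := by
  rw [expect, ← Finset.sum_mul, R.p_sum, one_mul]

lemma expect_add (R : RandAlg ι L) (Φ Ψ : DTree ι L → ℝ) :
    R.expect (fun t => Φ t + Ψ t) = R.expect Φ + R.expect Ψ := by
  simp only [expect, mul_add, Finset.sum_add_distrib]

lemma expect_const_mul (R : RandAlg ι L) (c : ℝ) (Φ : DTree ι L → ℝ) :
    R.expect (fun t => c * Φ t) = c * R.expect Φ := by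
  simp only [expect, Finset.mul_sum, mul_left_comm]

lemma expect_nonneg (R : RandAlg ι L) {Φ : DTree ι L → ℝ} (h : ∀ t, 0 ≤ Φ t) :
    0 ≤ R.expect Φ :=
  (expect_const R 0).symm.le.trans (R.expect_mono h)

def pure (t : DTree ι L) : RandAlg ι L :=
  ⟨1, fun _ => 1, fun _ => t, fun _ => zero_le_one, by simp⟩

lemma expect_pure (t : DTree ι L) (Φ : DTree ι L → ℝ) : (pure t).expect Φ = Φ t :=
  (Fin.sum_univ_one _).trans (one_mul _)

noncomputable def ofFintype {J : Type} [Fintype J] (p : J → ℝ) (T : J → DTree ι L)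
    (h0 : ∀ j, 0 ≤ p j) (h1 : ∑ j, p j = 1) : RandAlg ι L where
  k := Fintype.card J
  p i := p ((Fintype.equivFin J).symm i)
  T i := T ((Fintype.equivFin J).symm i)
  p_nonneg _ := h0 _
  p_sum := by rw [Equiv.sum_comp (Fintype.equivFin J).symm p, h1]

lemma expect_ofFintype {J : Type} [Fintype J] (p : J → ℝ) (T : J → DTree ι L)
    (h0 : ∀ j, 0 ≤ p j) (h1 : ∑ j, p j = 1) (Φ : DTree ι L → ℝ) :
    (ofFintype p T h0 h1).expect Φ = ∑ j, p j * Φ (T j) :=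
  Equiv.sum_comp (Fintype.equivFin J).symm fun j => p j * Φ (T j)

noncomputable def bind (R : RandAlg ι L) (F : DTree ι L → RandAlg ι L') : RandAlg ι L' :=
  ofFintype (fun s : Σ j, Fin (F (R.T j)).k => R.p s.1 * (F (R.T s.1)).p s.2)
    (fun s => (F (R.T s.1)).T s.2)
    (fun s => mul_nonneg (R.p_nonneg _) ((F _).p_nonneg _))
    (by
      rw [← Finset.univ_sigma_univ, Finset.sum_sigma]
      simp only [← Finset.mul_sum, RandAlg.p_sum, mul_one, R.p_sum])

lemma expect_bind (R : RandAlg ι L) (F : DTree ι L → RandAlg ι L') (Φ : DTree ι L' → ℝ) :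
    (R.bind F).expect Φ = R.expect fun t => (F t).expect Φ := by
  rw [bind, expect_ofFintype, ← Finset.univ_sigma_univ, Finset.sum_sigma]
  simp only [expect, Finset.mul_sum, mul_assoc]

noncomputable def node (i : ι) (R₀ R₁ : RandAlg ι L) : RandAlg ι L :=
  R₀.bind fun t₀ => R₁.bind fun t₁ => pure (.node i t₀ t₁)

lemma expect_node_of_eq_add (i : ι) (R₀ R₁ : RandAlg ι L) {Φ Φ₀ Φ₁ : DTree ι L → ℝ} (c : ℝ)
    (hΦ : ∀ t₀ t₁, Φ (.node i t₀ t₁) = c + Φ₀ t₀ + Φ₁ t₁) :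
    (node i R₀ R₁).expect Φ = c + R₀.expect Φ₀ + R₁.expect Φ₁ := by
  simp only [node, expect_bind, expect_pure, hΦ, expect_add, expect_const]

end RandAlg

section Weights

variable {ι : Type}

noncomputable def restrictAt (w : (ι → Bool) → ℝ) (i : ι) (b : Bool) : (ι → Bool) → ℝ :=
  {y | y i = b}.indicator w

lemma restrictAt_nonneg {w : (ι → Bool) → ℝ} (hw : 0 ≤ w) (i : ι) (b : Bool) :
    0 ≤ restrictAt w i b :=
  Set.indicator_nonneg fun x _ => hw x

lemma restrictAt_le {w : (ι → Bool) → ℝ} (hw : 0 ≤ w) (i : ι) (b : Bool) :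
    restrictAt w i b ≤ w :=
  Set.indicator_le_self' fun x _ => hw x

lemma restrictAt_apply_of_ne (w : (ι → Bool) → ℝ) {i : ι} {b : Bool} {x : ι → Bool}
    (h : x i ≠ b) : restrictAt w i b x = 0 :=
  Set.indicator_of_notMem (show x ∉ {y | y i = b} from h) w

lemma restrictAt_apply_self (w : (ι → Bool) → ℝ) (i : ι) (x : ι → Bool) :
    restrictAt w i (x i) x = w x :=
  Set.indicator_of_mem (show x ∈ {y | y i = x i} from rfl) w

def tilt (f : (ι → Bool) → Bool) (r s : ℝ) (w : (ι → Bool) → ℝ) : (ι → Bool) → ℝ :=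
  fun x => (if f x then r else s) * w x

lemma tilt_nonneg (f : (ι → Bool) → Bool) {r s : ℝ} (hr : 0 ≤ r) (hs : 0 ≤ s)
    {w : (ι → Bool) → ℝ} (hw : 0 ≤ w) : 0 ≤ tilt f r s w :=
  fun x => mul_nonneg (by split <;> assumption) (hw x)

lemma restrictAt_tilt (f : (ι → Bool) → Bool) (r s : ℝ) (w : (ι → Bool) → ℝ) (i : ι) (b : Bool) :
    restrictAt (tilt f r s w) i b = tilt f r s (restrictAt w i b) :=
  funext fun _ => Set.indicator_mul_right _ _ _

variable [Fintype ι] [DecidableEq ι]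

lemma sum_restrictAt_false_add_true (w : (ι → Bool) → ℝ) (i : ι) :
    ∑ x, restrictAt w i false x + ∑ x, restrictAt w i true x = ∑ x, w x := by
  rw [← Finset.sum_add_distrib]
  refine Finset.sum_congr rfl fun x _ => ?_
  cases hx : x i
  · rw [← hx, restrictAt_apply_self, restrictAt_apply_of_ne _ (by simp [hx]), add_zero]
  · rw [← hx, restrictAt_apply_self, restrictAt_apply_of_ne _ (by simp [hx]), zero_add]

lemma mass_restrictAt (w : (ι → Bool) → ℝ) (i : ι) (b : Bool) (S : Set (ι → Bool)) :
    mass (restrictAt w i b) S = mass w ({y | y i = b} ∩ S) := by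
  simp only [mass, restrictAt, Set.indicator_indicator, Set.inter_comm]

lemma mass_univ (w : (ι → Bool) → ℝ) : mass w Set.univ = ∑ x, w x := by
  simp only [mass, Set.indicator_univ]

lemma mass_false_add_mass_true (f : (ι → Bool) → Bool) (w : (ι → Bool) → ℝ) :
    mass w {y | f y = false} + mass w {y | f y = true} = ∑ x, w x := by
  have hcompl : {y | f y = false} = {y | f y = true}ᶜ := by ext; simp
  rw [hcompl, add_comm, mass, mass, ← Finset.sum_add_distrib]
  exact Finset.sum_congr rfl fun x _ => congr_fun (Set.indicator_self_add_compl _ w) x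

lemma mass_nonneg {w : (ι → Bool) → ℝ} (hw : 0 ≤ w) (S : Set (ι → Bool)) : 0 ≤ mass w S :=
  Finset.sum_nonneg fun x _ => Set.indicator_nonneg (fun y _ => hw y) x

lemma mass_tilt_setOf (f : (ι → Bool) → Bool) (r s : ℝ) (w : (ι → Bool) → ℝ) (c : Bool) :
    mass (tilt f r s w) {y | f y = c} = (if c then r else s) * mass w {y | f y = c} := by
  rw [mass, mass, Finset.mul_sum]
  refine Finset.sum_congr rfl fun x _ => ?_
  by_cases hx : f x = c
  · simp [Set.indicator, tilt, hx]
  · simp [Set.indicator, hx]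

end Weights

section TreeLoss

variable {ι L : Type}

lemma leafSet_node (i : ι) (t₀ t₁ : DTree ι L) (x : ι → Bool) :
    (DTree.node i t₀ t₁).leafSet x = {y | y i = x i} ∩ (if x i then t₁ else t₀).leafSet x := by
  rw [DTree.leafSet]
  cases x i <;> rfl

variable [Fintype ι] [DecidableEq ι]

noncomputable def treeHelLoss (f : (ι → Bool) → Bool) (w : (ι → Bool) → ℝ) (t : DTree ι L) : ℝ :=
  ∑ x, w x * (2 * Real.sqrt (leafBias f w t x * (1 - leafBias f w t x)))

noncomputable def treeCost (w : (ι → Bool) → ℝ) (t : DTree ι L) : ℝ :=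
  ∑ x, w x * (t.cost x : ℝ)

lemma helLossAlg_eq_expect (f : (ι → Bool) → Bool) (w : (ι → Bool) → ℝ) (R : RandAlg ι L) :
    helLossAlg f w R = R.expect (treeHelLoss f w) := rfl

lemma expCost_eq_expect (w : (ι → Bool) → ℝ) (R : RandAlg ι L) :
    expCost w R = R.expect (treeCost w) := rfl

lemma expCost_nonneg {w : (ι → Bool) → ℝ} (hw : 0 ≤ w) (R : RandAlg ι L) : 0 ≤ expCost w R :=
  R.expect_nonneg fun _ => Finset.sum_nonneg fun x _ => mul_nonneg (hw x) (Nat.cast_nonneg _)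

lemma expCost_le_mul {u v : (ι → Bool) → ℝ} {c : ℝ} (h : ∀ x, u x ≤ c * v x) (R : RandAlg ι L) :
    expCost u R ≤ c * expCost v R := by
  rw [expCost_eq_expect, expCost_eq_expect, ← RandAlg.expect_const_mul]
  refine R.expect_mono fun t => ?_
  rw [treeCost, treeCost, Finset.mul_sum]
  exact Finset.sum_le_sum fun x _ => by
    rw [← mul_assoc]; exact mul_le_mul_of_nonneg_right (h x) (Nat.cast_nonneg _)

lemma leafBias_node (f : (ι → Bool) → Bool) (w : (ι → Bool) → ℝ) (i : ι) (t₀ t₁ : DTree ι L)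
    (x : ι → Bool) :
    leafBias f w (.node i t₀ t₁) x
      = leafBias f (restrictAt w i (x i)) (if x i then t₁ else t₀) x := by
  simp only [leafBias, leafSet_node, mass_restrictAt, Set.inter_assoc]

lemma treeHelLoss_node (f : (ι → Bool) → Bool) (w : (ι → Bool) → ℝ) (i : ι)
    (t₀ t₁ : DTree ι L) :
    treeHelLoss f w (.node i t₀ t₁)
      = treeHelLoss f (restrictAt w i false) t₀ + treeHelLoss f (restrictAt w i true) t₁ := by
  rw [treeHelLoss, treeHelLoss, treeHelLoss, ← Finset.sum_add_distrib]
  refine Finset.sum_congr rfl fun x _ => ?_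
  rw [leafBias_node]
  cases hx : x i <;>
  · rw [← hx, restrictAt_apply_self, restrictAt_apply_of_ne _ (by simp [hx]), hx]
    simp

lemma treeCost_node (w : (ι → Bool) → ℝ) (i : ι) (t₀ t₁ : DTree ι L) :
    treeCost w (.node i t₀ t₁)
      = ∑ x, w x + treeCost (restrictAt w i false) t₀ + treeCost (restrictAt w i true) t₁ := by
  rw [treeCost, treeCost, treeCost, ← Finset.sum_add_distrib, ← Finset.sum_add_distrib]
  refine Finset.sum_congr rfl fun x _ => ?_
  cases hx : x i <;>
  · rw [← hx, restrictAt_apply_self, restrictAt_apply_of_ne _ (by simp [hx])]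
    simp only [DTree.cost, hx, Bool.false_eq_true, ↓reduceIte, Nat.cast_add, Nat.cast_one]
    ring

end TreeLoss

section Affinity

variable {ι L : Type} [Fintype ι] [DecidableEq ι]

noncomputable def leafHelLoss (f : (ι → Bool) → Bool) (w : (ι → Bool) → ℝ) : ℝ :=
  2 * Real.sqrt (mass w {y | f y = false} * mass w {y | f y = true})

noncomputable def sumLeafHelLoss (f : (ι → Bool) → Bool) : ((ι → Bool) → ℝ) → DTree ι L → ℝ
  | w, .leaf _ => leafHelLoss f w
  | w, .node i t₀ t₁ =>
      sumLeafHelLoss f (restrictAt w i false) t₀ + sumLeafHelLoss f (restrictAt w i true) t₁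

lemma add_mul_sqrt_bias {a b : ℝ} (ha : 0 ≤ a) (hb : 0 ≤ b) :
    (a + b) * (2 * Real.sqrt (b / (a + b) * (1 - b / (a + b)))) = 2 * Real.sqrt (a * b) := by
  rcases (add_nonneg ha hb).eq_or_lt with hab | hab
  · obtain ⟨rfl, rfl⟩ : a = 0 ∧ b = 0 := ⟨by linarith, by linarith⟩
    simp
  · have hbias : b / (a + b) * (1 - b / (a + b)) = a * b / (a + b) ^ 2 := by
      field_simp; ring
    rw [hbias, Real.sqrt_div' _ (sq_nonneg _), Real.sqrt_sq hab.le]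
    field_simp

lemma treeHelLoss_leaf (f : (ι → Bool) → Bool) {w : (ι → Bool) → ℝ} (hw : 0 ≤ w) (l : L) :
    treeHelLoss f w (.leaf l) = leafHelLoss f w := by
  have hbias : ∀ x, leafBias f w (.leaf l) x = mass w {y | f y = true} / ∑ y, w y := fun x => by
    rw [leafBias, DTree.leafSet, Set.univ_inter, mass_univ]
  simp only [treeHelLoss, hbias, ← Finset.sum_mul, leafHelLoss]
  rw [← mass_false_add_mass_true f w]
  exact add_mul_sqrt_bias (mass_nonneg hw _) (mass_nonneg hw _)

lemma treeHelLoss_eq_sumLeafHelLoss (f : (ι → Bool) → Bool) (t : DTree ι L) {w : (ι → Bool) → ℝ}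
    (hw : 0 ≤ w) : treeHelLoss f w t = sumLeafHelLoss f w t := by
  induction t generalizing w with
  | leaf l => rw [treeHelLoss_leaf f hw, sumLeafHelLoss]
  | node i t₀ t₁ ih₀ ih₁ =>
    rw [treeHelLoss_node, sumLeafHelLoss, ih₀ (restrictAt_nonneg hw i false),
      ih₁ (restrictAt_nonneg hw i true)]

lemma leafHelLoss_tilt (f : (ι → Bool) → Bool) {r s : ℝ} (hr : 0 ≤ r) (hs : 0 ≤ s)
    (w : (ι → Bool) → ℝ) :
    leafHelLoss f (tilt f r s w) = Real.sqrt (r * s) * leafHelLoss f w := by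
  rw [leafHelLoss, leafHelLoss, mass_tilt_setOf, mass_tilt_setOf, if_neg Bool.false_ne_true,
    if_pos rfl,
    show s * mass w {y | f y = false} * (r * mass w {y | f y = true})
      = r * s * (mass w {y | f y = false} * mass w {y | f y = true}) by ring,
    Real.sqrt_mul (mul_nonneg hr hs)]
  ring

lemma sumLeafHelLoss_tilt (f : (ι → Bool) → Bool) {r s : ℝ} (hr : 0 ≤ r) (hs : 0 ≤ s)
    (t : DTree ι L) (w : (ι → Bool) → ℝ) :
    sumLeafHelLoss f (tilt f r s w) t = Real.sqrt (r * s) * sumLeafHelLoss f w t := by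
  induction t generalizing w with
  | leaf l => exact leafHelLoss_tilt f hr hs w
  | node i t₀ t₁ ih₀ ih₁ =>
    rw [sumLeafHelLoss, sumLeafHelLoss, restrictAt_tilt, restrictAt_tilt, ih₀, ih₁, mul_add]

lemma helLossAlg_tilt (f : (ι → Bool) → Bool) {r s : ℝ} (hr : 0 ≤ r) (hs : 0 ≤ s)
    {w : (ι → Bool) → ℝ} (hw : 0 ≤ w) (R : RandAlg ι L) :
    helLossAlg f (tilt f r s w) R = Real.sqrt (r * s) * helLossAlg f w R := by
  rw [helLossAlg_eq_expect, helLossAlg_eq_expect, ← RandAlg.expect_const_mul]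
  refine R.expect_congr fun t => ?_
  rw [treeHelLoss_eq_sumLeafHelLoss f t (tilt_nonneg f hr hs hw), sumLeafHelLoss_tilt f hr hs,
    treeHelLoss_eq_sumLeafHelLoss f t hw]

end Affinity

section Graft

variable {ι L L' : Type}

noncomputable def graft : DTree ι L → ((ι → Bool) → ℝ) → (((ι → Bool) → ℝ) → RandAlg ι L') →
    RandAlg ι L'
  | .leaf _, w, g => g w
  | .node i t₀ t₁, w, g =>
      RandAlg.node i (graft t₀ (restrictAt w i false) g) (graft t₁ (restrictAt w i true) g)

lemma expect_graft_le {Φ : ((ι → Bool) → ℝ) → DTree ι L' → ℝ}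
    {Ψ : ((ι → Bool) → ℝ) → DTree ι L → ℝ} (c : ((ι → Bool) → ℝ) → ℝ)
    (hΦ : ∀ w i t₀ t₁,
      Φ w (.node i t₀ t₁) = c w + Φ (restrictAt w i false) t₀ + Φ (restrictAt w i true) t₁)
    (hΨ : ∀ w i t₀ t₁,
      Ψ w (.node i t₀ t₁) = c w + Ψ (restrictAt w i false) t₀ + Ψ (restrictAt w i true) t₁)
    (D : DTree ι L) {w : (ι → Bool) → ℝ} (hw : 0 ≤ w) (g : ((ι → Bool) → ℝ) → RandAlg ι L')
    (hg : ∀ u l, 0 ≤ u → u ≤ w → (g u).expect (Φ u) ≤ Ψ u (.leaf l)) :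
    (graft D w g).expect (Φ w) ≤ Ψ w D := by
  induction D generalizing w with
  | leaf l => exact hg w l hw le_rfl
  | node i t₀ t₁ ih₀ ih₁ =>
    rw [graft, RandAlg.expect_node_of_eq_add i _ _ (c w) (hΦ w i), hΨ]
    gcongr
    · exact ih₀ (restrictAt_nonneg hw i false)
        fun u l hu huw => hg u l hu (huw.trans (restrictAt_le hw i false))
    · exact ih₁ (restrictAt_nonneg hw i true)
        fun u l hu huw => hg u l hu (huw.trans (restrictAt_le hw i true))

end Graft

section QueryAll

variable {ι : Type}

def fullTree : List ι → DTree ι Unit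
  | [] => .leaf ()
  | i :: l => .node i (fullTree l) (fullTree l)

lemma cost_fullTree (l : List ι) (x : ι → Bool) : (fullTree l).cost x = l.length := by
  induction l with
  | nil => rfl
  | cons i l ih => simp [fullTree, DTree.cost, ih]

lemma leafSet_fullTree (l : List ι) (x : ι → Bool) :
    (fullTree l).leafSet x = {y | ∀ i ∈ l, y i = x i} := by
  induction l with
  | nil => simp [fullTree, DTree.leafSet]
  | cons i l ih =>
    rw [fullTree, leafSet_node, ite_self, ih]
    ext y
    simp

variable [Fintype ι]

noncomputable def queryAllTree : DTree ι Unit :=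
  fullTree (Finset.univ : Finset ι).toList

lemma leafSet_queryAllTree (x : ι → Bool) : (queryAllTree : DTree ι Unit).leafSet x = {x} := by
  ext y
  simp [queryAllTree, leafSet_fullTree, funext_iff]

variable [DecidableEq ι]

lemma mass_singleton_inter (w : (ι → Bool) → ℝ) (x : ι → Bool) (S : Set (ι → Bool)) :
    mass w ({x} ∩ S) = S.indicator w x := by
  rw [mass, Finset.sum_eq_single x (fun y _ hy => Set.indicator_of_notMem (fun h => hy h.1) w)
    (by simp), ← Set.indicator_indicator, Set.indicator_of_mem (Set.mem_singleton x)]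

lemma treeHelLoss_queryAllTree (f : (ι → Bool) → Bool) (w : (ι → Bool) → ℝ) :
    treeHelLoss f w queryAllTree = 0 := by
  refine Finset.sum_eq_zero fun x _ => ?_
  have hbias : leafBias f w queryAllTree x = {y | f y = true}.indicator w x / w x := by
    rw [leafBias, leafSet_queryAllTree, mass_singleton_inter,
      ← Set.inter_univ {x}, mass_singleton_inter, Set.indicator_univ]
  by_cases hf : f x = true
  · rcases eq_or_ne (w x) 0 with h | h <;> simp [hbias, Set.indicator, hf, h]
  · simp [hbias, Set.indicator, hf]

lemma treeCost_queryAllTree (w : (ι → Bool) → ℝ) :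
    treeCost w queryAllTree = Fintype.card ι * ∑ x, w x := by
  simp [treeCost, queryAllTree, cost_fullTree, Finset.mul_sum, mul_comm]

end QueryAll

section Complexity

variable {ι : Type} [Fintype ι] [DecidableEq ι] {X : Set (ι → Bool)} {f : (ι → Bool) → Bool}

def achievableCosts (f : (ι → Bool) → Bool) (w : (ι → Bool) → ℝ) (ε : ℝ) : Set ℝ :=
  {c | ∃ R : RandAlg ι Unit, helLossAlg f w R ≤ ε ∧ expCost w R = c}

lemma card_mem_achievableCosts (f : (ι → Bool) → Bool) {w : (ι → Bool) → ℝ} {ε : ℝ}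
    (hε : 0 ≤ ε) (hw : ∑ x, w x = 1) : (Fintype.card ι : ℝ) ∈ achievableCosts f w ε := by
  refine ⟨RandAlg.pure queryAllTree, ?_, ?_⟩
  · rwa [helLossAlg_eq_expect, RandAlg.expect_pure, treeHelLoss_queryAllTree]
  · rw [expCost_eq_expect, RandAlg.expect_pure, treeCost_queryAllTree, hw, mul_one]

lemma bddBelow_achievableCosts (f : (ι → Bool) → Bool) {w : (ι → Bool) → ℝ} (hw : 0 ≤ w)
    (ε : ℝ) : BddBelow (achievableCosts f w ε) :=
  ⟨0, by rintro _ ⟨R, -, rfl⟩; exact expCost_nonneg hw R⟩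

lemma RmaxHelLoss_nonneg (X : Set (ι → Bool)) (f : (ι → Bool) → Bool) (ε : ℝ) :
    0 ≤ RmaxHelLoss X f ε :=
  Real.iSup_nonneg fun μ => Real.sInf_nonneg <| by
    rintro _ ⟨R, -, rfl⟩; exact expCost_nonneg μ.nonneg R

lemma sInf_achievableCosts_le_RmaxHelLoss {ε : ℝ} (hε : 0 ≤ ε) (μ : InputDist ι X) :
    sInf (achievableCosts f μ.μ ε) ≤ RmaxHelLoss X f ε := by
  refine le_ciSup (f := fun ν : InputDist ι X => sInf (achievableCosts f ν.μ ε))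
    ⟨Fintype.card ι, ?_⟩ μ
  rintro _ ⟨ν, rfl⟩
  exact csInf_le (bddBelow_achievableCosts f ν.nonneg ε) (card_mem_achievableCosts f hε ν.sum_one)

lemma exists_helLossAlg_le_of_RmaxHelLoss_lt {ε C : ℝ} (hε : 0 ≤ ε) (μ : InputDist ι X)
    (hC : RmaxHelLoss X f ε < C) :
    ∃ R : RandAlg ι Unit, helLossAlg f μ.μ R ≤ ε ∧ expCost μ.μ R < C := by
  obtain ⟨_, ⟨R, hloss, rfl⟩, hcost⟩ := exists_lt_of_csInf_lt
    ⟨_, card_mem_achievableCosts f hε μ.sum_one⟩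
    ((sInf_achievableCosts_le_RmaxHelLoss hε μ).trans_lt hC)
  exact ⟨R, hloss, hcost⟩

lemma RmaxHelLoss_antitoneOn (X : Set (ι → Bool)) (f : (ι → Bool) → Bool) :
    AntitoneOn (RmaxHelLoss X f) (Set.Ici 0) := fun ε hε ε' _ hεε' =>
  Real.iSup_le (fun μ =>
      (csInf_le_csInf (bddBelow_achievableCosts f μ.nonneg ε')
        ⟨_, card_mem_achievableCosts f hε μ.sum_one⟩
        fun _ ⟨R, hloss, hcost⟩ => ⟨R, hloss.trans hεε', hcost⟩).trans
      (sInf_achievableCosts_le_RmaxHelLoss hε μ))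
    (RmaxHelLoss_nonneg X f ε)

end Complexity

section Boosting

variable {ι : Type} [Fintype ι] [DecidableEq ι] {X : Set (ι → Bool)} {f : (ι → Bool) → Bool}

/-- Run an algorithm of loss `β` for `u` with both classes rescaled to mass `1/2`: on `u` itself its
loss is multiplied by `leafHelLoss f u`, and its cost by at most `2 ∑ x, u x`. -/
lemma exists_helLossAlg_le_mul_leafHelLoss {β C : ℝ} (hβ : 0 ≤ β) (hC : RmaxHelLoss X f β < C)
    {u : (ι → Bool) → ℝ} (hu : 0 ≤ u) (huX : ∀ x ∉ X, u x = 0) :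
    ∃ R : RandAlg ι Unit,
      helLossAlg f u R ≤ β * leafHelLoss f u ∧ expCost u R ≤ 2 * C * ∑ x, u x := by
  set a := mass u {y | f y = false} with ha_def
  set b := mass u {y | f y = true} with hb_def
  have hsum : ∑ x, u x = a + b := (mass_false_add_mass_true f u).symm
  have hC0 : 0 ≤ C := (RmaxHelLoss_nonneg X f β).trans hC.le
  by_cases hab : a * b = 0
  · have hleaf : leafHelLoss f u = 0 := by
      rw [leafHelLoss, ← ha_def, ← hb_def, hab, Real.sqrt_zero, mul_zero]
    refine ⟨RandAlg.pure (.leaf ()), ?_, ?_⟩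
    · rw [helLossAlg_eq_expect, RandAlg.expect_pure, treeHelLoss_leaf f hu, hleaf, mul_zero]
    · rw [expCost_eq_expect, RandAlg.expect_pure]
      simp only [treeCost, DTree.cost, Nat.cast_zero, mul_zero, Finset.sum_const_zero]
      exact mul_nonneg (mul_nonneg zero_le_two hC0) (Finset.sum_nonneg fun x _ => hu x)
  have ha : 0 < a := (mass_nonneg hu _).lt_of_ne (left_ne_zero_of_mul hab).symm
  have hb : 0 < b := (mass_nonneg hu _).lt_of_ne (right_ne_zero_of_mul hab).symm
  set ν := tilt f (1 / (2 * b)) (1 / (2 * a)) u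
  have hν : 0 ≤ ν := tilt_nonneg f (by positivity) (by positivity) hu
  have hν_sum : ∑ x, ν x = 1 := by
    rw [← mass_false_add_mass_true f ν, mass_tilt_setOf, mass_tilt_setOf, ← ha_def, ← hb_def]
    simp only [Bool.false_eq_true, if_false, if_true]
    field_simp
    ring
  have hνX : ∀ x ∉ X, ν x = 0 := fun x hx => by simp [ν, tilt, huX x hx]
  have hu_eq : u = tilt f (2 * b) (2 * a) ν := funext fun x => by
    simp only [ν, tilt]
    split_ifs <;> field_simp
  obtain ⟨R, hloss, hcost⟩ :=
    exists_helLossAlg_le_of_RmaxHelLoss_lt hβ ⟨ν, hν, hν_sum, hνX⟩ hC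
  have hleaf : Real.sqrt (2 * b * (2 * a)) = leafHelLoss f u := by
    rw [leafHelLoss, ← ha_def, ← hb_def, show 2 * b * (2 * a) = 2 ^ 2 * (a * b) by ring,
      Real.sqrt_mul' _ (by positivity), Real.sqrt_sq zero_le_two]
  refine ⟨R, ?_, ?_⟩
  · calc helLossAlg f u R = leafHelLoss f u * helLossAlg f ν R := by
          rw [← hleaf, hu_eq, helLossAlg_tilt f (by positivity) (by positivity) hν]
      _ ≤ leafHelLoss f u * β := mul_le_mul_of_nonneg_left hloss (by rw [← hleaf]; positivity)
      _ = β * leafHelLoss f u := mul_comm _ _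
  · have hu_le : ∀ x, u x ≤ 2 * (a + b) * ν x := fun x => by
      rw [hu_eq, tilt]
      refine mul_le_mul_of_nonneg_right ?_ (hν x)
      split_ifs <;> linarith
    calc expCost u R ≤ 2 * (a + b) * expCost ν R := expCost_le_mul hu_le R
      _ ≤ 2 * (a + b) * C := mul_le_mul_of_nonneg_left hcost.le (by positivity)
      _ = 2 * C * ∑ x, u x := by rw [hsum]; ring

theorem RmaxHelLoss_mul_le {α β : ℝ} (hα : 0 ≤ α) (hβ : 0 ≤ β) :
    RmaxHelLoss X f (α * β) ≤ RmaxHelLoss X f α + 2 * RmaxHelLoss X f β := by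
  refine Real.iSup_le (fun μ => le_of_forall_pos_le_add fun δ hδ => ?_)
    (by linarith [RmaxHelLoss_nonneg X f α, RmaxHelLoss_nonneg X f β])
  obtain ⟨R, hloss, hcost⟩ := exists_helLossAlg_le_of_RmaxHelLoss_lt hα μ
    (lt_add_of_pos_right (RmaxHelLoss X f α) (half_pos hδ))
  have : Nonempty (RandAlg ι Unit) := ⟨RandAlg.pure (.leaf ())⟩
  choose! g hg_loss hg_cost using fun u (hu : 0 ≤ u) (huX : ∀ x ∉ X, u x = 0) =>
    exists_helLossAlg_le_mul_leafHelLoss hβ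
      (lt_add_of_pos_right (RmaxHelLoss X f β) (by positivity : 0 < δ / 4)) hu huX
  have hsupp : ∀ u, 0 ≤ u → u ≤ μ.μ → ∀ x ∉ X, u x = 0 := fun u hu huμ x hx =>
    le_antisymm ((huμ x).trans_eq (μ.supp x hx)) (hu x)
  set R' := R.bind fun D => graft D μ.μ g
  have hloss' : helLossAlg f μ.μ R' ≤ α * β := calc
    helLossAlg f μ.μ R' = R.expect fun D => (graft D μ.μ g).expect (treeHelLoss f μ.μ) :=
        RandAlg.expect_bind R (fun D => graft D μ.μ g) (treeHelLoss f μ.μ)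
    _ ≤ R.expect fun D => β * sumLeafHelLoss f μ.μ D :=
        R.expect_mono fun D => expect_graft_le (Φ := treeHelLoss f)
          (Ψ := fun w D => β * sumLeafHelLoss f w D) (fun _ => 0)
          (fun w i t₀ t₁ => by rw [treeHelLoss_node, zero_add])
          (fun w i t₀ t₁ => by rw [sumLeafHelLoss, zero_add, mul_add]) D μ.nonneg g
          fun u _ hu huμ => hg_loss u hu (hsupp u hu huμ)
    _ = β * helLossAlg f μ.μ R := by
        rw [RandAlg.expect_const_mul, helLossAlg_eq_expect,
          R.expect_congr fun D => treeHelLoss_eq_sumLeafHelLoss f D μ.nonneg]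
    _ ≤ α * β := by rw [mul_comm α]; exact mul_le_mul_of_nonneg_left hloss hβ
  have hcost' : expCost μ.μ R' ≤ expCost μ.μ R + 2 * (RmaxHelLoss X f β + δ / 4) := calc
    expCost μ.μ R' = R.expect fun D => (graft D μ.μ g).expect (treeCost μ.μ) :=
        RandAlg.expect_bind R (fun D => graft D μ.μ g) (treeCost μ.μ)
    _ ≤ R.expect fun D => treeCost μ.μ D + 2 * (RmaxHelLoss X f β + δ / 4) * ∑ x, μ.μ x :=
        R.expect_mono fun D => expect_graft_le (Φ := treeCost)
          (Ψ := fun w D => treeCost w D + 2 * (RmaxHelLoss X f β + δ / 4) * ∑ x, w x)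
          (fun w => ∑ x, w x)
          (fun w i t₀ t₁ => treeCost_node w i t₀ t₁)
          (fun w i t₀ t₁ => by rw [treeCost_node, ← sum_restrictAt_false_add_true w i]; ring)
          D μ.nonneg g fun u l hu huμ => by
            simpa [treeCost, DTree.cost, expCost_eq_expect] using hg_cost u hu (hsupp u hu huμ)
    _ = expCost μ.μ R + 2 * (RmaxHelLoss X f β + δ / 4) := by
        rw [RandAlg.expect_add, RandAlg.expect_const, μ.sum_one, mul_one, expCost_eq_expect]
  exact (csInf_le (bddBelow_achievableCosts f μ.nonneg _) ⟨R', hloss', rfl⟩).trans (by linarith)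

end Boosting

theorem hellinger_loss_boosting_general
    (m : ℕ) (X : Set (Fin m → Bool)) (f : (Fin m → Bool) → Bool)
    (α β : ℝ) (hα1 : 1 / 2 ≤ α) (hβ1 : 0 ≤ β) (hβ2 : β ≤ 1) :
    RmaxHelLoss X f (α * (1 - (1 - β) / 6)) ≤
      RmaxHelLoss X f α + 2 * RmaxHelLoss X f β := by
  have hα : 0 ≤ α := by linarith
  calc RmaxHelLoss X f (α * (1 - (1 - β) / 6)) ≤ RmaxHelLoss X f (α * β) :=
        RmaxHelLoss_antitoneOn X f (mul_nonneg hα hβ1) (mul_nonneg hα (by linarith))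
          (mul_le_mul_of_nonneg_left (by linarith) hα)
    _ ≤ RmaxHelLoss X f α + 2 * RmaxHelLoss X f β := RmaxHelLoss_mul_le hα hβ1

/-- **Hellinger loss boosting**:
`R̄̄_{Hel↓, α(1−(1−β)/6)}(f) ≤ R̄̄_{Hel↓, α}(f) + 2·R̄̄_{Hel↓, β}(f)`. -/
theorem hellinger_loss_boosting
    (m : ℕ) (X : Set (Fin m → Bool)) (f : (Fin m → Bool) → Bool)
    (α β : ℝ) (hα1 : 1 / 2 ≤ α) (hα2 : α ≤ 1) (hβ1 : 0 ≤ β) (hβ2 : β ≤ 1) :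
    RmaxHelLoss X f (α * (1 - (1 - β) / 6)) ≤
      RmaxHelLoss X f α + 2 * RmaxHelLoss X f β :=
  hellinger_loss_boosting_general m X f α β hα1 hβ1 hβ2
end

section
/- Monotone ratio inequality for powers of two: let λ > 0 and let k ∈ ℕ, k ≥ 2, satisfy (2^{−1/(2k)} − 2^{−1/2}) / (1 − 2^{−1/2}) ≥ λ. Then for every ε ∈ (0, 1/(2k)] and every integer ℓ ≥ 1, (2^{−εℓ} − 2^{−kεℓ}) / (1 − 2^{−kεℓ}) ≥ λ^ℓ. -/
open Finset

/-- Geometric-sum formula for `g x = (x - x^k)/(1 - x^k)`. -/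
lemma g_eq_aux (k : ℕ) (hk : 1 ≤ k) {x : ℝ} (hx0 : 0 ≤ x) (hx1 : x < 1) :
    (x - x ^ k) / (1 - x ^ k) = 1 - 1 / (∑ i ∈ Finset.range k, x ^ i) := by
  have hxk : x ^ k < 1 := pow_lt_one₀ hx0 hx1 (by omega)
  have hden : (0:ℝ) < 1 - x ^ k := by linarith
  have hS : (1 - x) * (∑ i ∈ Finset.range k, x ^ i) = 1 - x ^ k := by
    have := geom_sum_mul x k
    linarith [this]
  have hSpos : 0 < ∑ i ∈ Finset.range k, x ^ i := by
    have h1x : (0:ℝ) < 1 - x := by linarith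
    nlinarith [hS]
  field_simp
  nlinarith [hS]

lemma g_nonneg_aux (k : ℕ) (hk : 1 ≤ k) {x : ℝ} (hx0 : 0 ≤ x) (hx1 : x < 1) :
    0 ≤ (x - x ^ k) / (1 - x ^ k) := by
  have hxk : x ^ k ≤ x := pow_le_of_le_one hx0 hx1.le (by omega)
  have : x ^ k < 1 := pow_lt_one₀ hx0 hx1 (by omega)
  apply div_nonneg <;> linarith

lemma g_mono_aux (k : ℕ) (hk : 1 ≤ k) {x y : ℝ} (hx0 : 0 ≤ x) (hxy : x ≤ y) (hy1 : y < 1) :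
    (x - x ^ k) / (1 - x ^ k) ≤ (y - y ^ k) / (1 - y ^ k) := by
  rw [g_eq_aux k hk hx0 (lt_of_le_of_lt hxy hy1), g_eq_aux k hk (hx0.trans hxy) hy1]
  have hSx : (0:ℝ) < ∑ i ∈ Finset.range k, x ^ i := by
    refine Finset.sum_pos' (fun i _ => pow_nonneg hx0 i) ⟨0, ?_, by norm_num⟩
    simp [Finset.mem_range]; omega
  have hle : (∑ i ∈ Finset.range k, x ^ i) ≤ ∑ i ∈ Finset.range k, y ^ i :=
    Finset.sum_le_sum fun i _ => pow_le_pow_left₀ hx0 hxy i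
  have := one_div_le_one_div_of_le hSx hle
  linarith

/-- Supermultiplicativity of `g`. -/
lemma g_mul_aux (k : ℕ) (hk : 2 ≤ k) {u v : ℝ} (hu0 : 0 < u) (hu1 : u < 1)
    (hv0 : 0 < v) (hv1 : v < 1) :
    (u - u ^ k) / (1 - u ^ k) * ((v - v ^ k) / (1 - v ^ k)) ≤
      (u * v - (u * v) ^ k) / (1 - (u * v) ^ k) := by
  set a := u ^ (k - 1) with ha
  set b := v ^ (k - 1) with hb
  have hkk : k - 1 + 1 = k := by omega
  have hau : u ^ k = a * u := by rw [ha, ← pow_succ, hkk]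
  have hbv : v ^ k = b * v := by rw [hb, ← pow_succ, hkk]
  have habuv : (u * v) ^ k = a * b * (u * v) := by rw [mul_pow, hau, hbv]; ring
  have ha0 : 0 < a := pow_pos hu0 _
  have ha1 : a < 1 := pow_lt_one₀ hu0.le hu1 (by omega)
  have hb0 : 0 < b := pow_pos hv0 _
  have hb1 : b < 1 := pow_lt_one₀ hv0.le hv1 (by omega)
  have hauv : a * u < 1 := by nlinarith
  have hbvv : b * v < 1 := by nlinarith
  have hab1 : a * b < 1 := by nlinarith
  have huv1 : u * v < 1 := by nlinarith
  have habuv1 : a * b * (u * v) < 1 := by nlinarith [mul_pos ha0 hb0, mul_pos hu0 hv0]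
  have d1 : (0:ℝ) < 1 - u ^ k := by rw [hau]; linarith
  have d2 : (0:ℝ) < 1 - v ^ k := by rw [hbv]; linarith
  have d3 : (0:ℝ) < 1 - (u * v) ^ k := by rw [habuv]; linarith
  rw [div_mul_div_comm, div_le_div_iff₀ (by positivity) d3]
  have key : (u * v - (u * v) ^ k) * ((1 - u ^ k) * (1 - v ^ k)) -
      (u - u ^ k) * (v - v ^ k) * (1 - (u * v) ^ k) =
      u * v * (a * (1 - b) * (1 - b * v) * (1 - u) + b * (1 - a) * (1 - a * u) * (1 - v)) := by
    rw [hau, hbv, habuv]; ring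
  nlinarith [mul_nonneg (mul_nonneg (mul_nonneg ha0.le (by linarith : (0:ℝ) ≤ 1 - b))
      (by linarith : (0:ℝ) ≤ 1 - b * v)) (by linarith : (0:ℝ) ≤ 1 - u),
    mul_nonneg (mul_nonneg (mul_nonneg hb0.le (by linarith : (0:ℝ) ≤ 1 - a))
      (by linarith : (0:ℝ) ≤ 1 - a * u)) (by linarith : (0:ℝ) ≤ 1 - v),
    mul_pos hu0 hv0]

/-- **Monotone ratio inequality for powers of two**: if `λ > 0` and `k ≥ 2` satisfies
`(2^{−1/(2k)} − 2^{−1/2})/(1 − 2^{−1/2}) ≥ λ`, then for every `ε ∈ (0, 1/(2k)]` and every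
integer `ℓ ≥ 1`, `(2^{−εℓ} − 2^{−kεℓ})/(1 − 2^{−kεℓ}) ≥ λ^ℓ`. -/
theorem monotone_ratio_inequality
    (lam : ℝ) (hlam : 0 < lam) (k : ℕ) (hk : 2 ≤ k)
    (hbase : lam ≤ ((2 : ℝ) ^ (-(1 / (2 * (k : ℝ)))) - (2 : ℝ) ^ (-(1 / 2) : ℝ)) /
      (1 - (2 : ℝ) ^ (-(1 / 2) : ℝ)))
    (ε : ℝ) (hε0 : 0 < ε) (hε1 : ε ≤ 1 / (2 * (k : ℝ)))
    (ℓ : ℕ) (hℓ : 1 ≤ ℓ) :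
    lam ^ ℓ ≤ ((2 : ℝ) ^ (-(ε * (ℓ : ℝ))) - (2 : ℝ) ^ (-((k : ℝ) * ε * (ℓ : ℝ)))) /
      (1 - (2 : ℝ) ^ (-((k : ℝ) * ε * (ℓ : ℝ)))) := by
  have hk0 : (0:ℝ) < (k:ℝ) := by positivity
  set x : ℝ := (2:ℝ) ^ (-ε) with hx
  set x₀ : ℝ := (2:ℝ) ^ (-(1 / (2 * (k:ℝ)))) with hx0def
  have hx0 : 0 < x := Real.rpow_pos_of_pos (by norm_num) _
  have hx1 : x < 1 := Real.rpow_lt_one_of_one_lt_of_neg (by norm_num) (by linarith)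
  have hx00 : 0 < x₀ := Real.rpow_pos_of_pos (by norm_num) _
  -- x₀ ≤ x
  have hx0x : x₀ ≤ x := by
    apply Real.rpow_le_rpow_of_exponent_le (by norm_num)
    linarith
  -- x₀^k = 2^{-1/2}
  have hx0k : x₀ ^ k = (2:ℝ) ^ (-(1 / 2) : ℝ) := by
    rw [hx0def, ← Real.rpow_natCast (_ ^ _) k, ← Real.rpow_mul (by norm_num)]
    congr 1
    field_simp
  -- hbase : lam ≤ g x₀
  have hbase' : lam ≤ (x₀ - x₀ ^ k) / (1 - x₀ ^ k) := by
    rw [hx0k]; exact hbase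
  -- lam ≤ g x
  have hgx : lam ≤ (x - x ^ k) / (1 - x ^ k) :=
    hbase'.trans (g_mono_aux k (by omega) hx00.le hx0x hx1)
  -- induction: lam^n ≤ g (x^n) for n ≥ 1
  have main : ∀ n : ℕ, 1 ≤ n → lam ^ n ≤ (x ^ n - (x ^ n) ^ k) / (1 - (x ^ n) ^ k) := by
    intro n hn
    induction n, hn using Nat.le_induction with
    | base => simpa using hgx
    | succ n hn ih =>
      have hxn0 : 0 < x ^ n := pow_pos hx0 n
      have hxn1 : x ^ n < 1 := pow_lt_one₀ hx0.le hx1 (by omega)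
      calc lam ^ (n + 1) = lam ^ n * lam := by ring
        _ ≤ ((x ^ n - (x ^ n) ^ k) / (1 - (x ^ n) ^ k)) * ((x - x ^ k) / (1 - x ^ k)) := by
            apply mul_le_mul ih hgx hlam.le
            exact g_nonneg_aux k (by omega) hxn0.le hxn1
        _ ≤ (x ^ n * x - (x ^ n * x) ^ k) / (1 - (x ^ n * x) ^ k) :=
            g_mul_aux k hk hxn0 hxn1 hx0 hx1
        _ = (x ^ (n + 1) - (x ^ (n + 1)) ^ k) / (1 - (x ^ (n + 1)) ^ k) := by
            rw [pow_succ]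
  have hxl : x ^ ℓ = (2:ℝ) ^ (-(ε * (ℓ:ℝ))) := by
    rw [hx, ← Real.rpow_natCast (_ ^ _) ℓ, ← Real.rpow_mul (by norm_num)]
    ring_nf
  have hxlk : (x ^ ℓ) ^ k = (2:ℝ) ^ (-((k:ℝ) * ε * (ℓ:ℝ))) := by
    rw [hxl, ← Real.rpow_natCast (_ ^ _) k, ← Real.rpow_mul (by norm_num)]
    ring_nf
  have := main ℓ hℓ
  rwa [hxlk, hxl] at this
end
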